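/- Let C be a k-linear category with finite biproducts. Then there is a well-defined homomorphism of abelian groups h_C : K_0(C) → Tr(C) (the Chern character map) determined by h_C([X]_≅) = [1_X] for every object X of C. -/

import Mathlib

open CategoryTheory CategoryTheory.Limits DirectSum

variable (k : Type*) [CommRing k]
variable (C : Type*) [Category C]

attribute [local instance] CategoryTheory.isIsomorphicSetoid
attribute [local instance] CategoryTheory.Limits.hasBinaryBiproducts_of_finite_biproducts

section TraceDefs

variable [Preadditive C] [CategoryTheory.Linear k C]

/-- The submodule of `⨁ X, End X` spanned by the commutators `f ≫ g - g ≫ f`,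
for all pairs of morphisms `f : X ⟶ Y` and `g : Y ⟶ X`. -/
def traceRelations : Submodule k (⨁ X : C, (X ⟶ X)) :=
  letI : DecidableEq C := Classical.decEq C
  Submodule.span k
    { m | ∃ (X Y : C) (f : X ⟶ Y) (g : Y ⟶ X),
        m = DirectSum.of (fun Z : C => Z ⟶ Z) X (f ≫ g) -
            DirectSum.of (fun Z : C => Z ⟶ Z) Y (g ≫ f) }

/-- The trace (zeroth Hochschild homology) of a `k`-linear category `C`:
the quotient of `⨁ X, End X` by the span of all commutators `f ≫ g - g ≫ f`. -/
abbrev CatTrace := (⨁ X : C, (X ⟶ X)) ⧸ traceRelations k C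

/-- The class `[f]` in `Tr(C)` of an endomorphism `f : X ⟶ X`. -/
noncomputable def traceClass {X : C} (f : X ⟶ X) : CatTrace k C :=
  letI : DecidableEq C := Classical.decEq C
  Submodule.Quotient.mk (DirectSum.of (fun Z : C => Z ⟶ Z) X f)

end TraceDefs

section K0Defs

variable [Preadditive C] [HasBinaryBiproducts C]

/-- The subgroup of the free abelian group on the isomorphism classes of objects of `C`
generated by the elements `[X ⊕ Y] - [X] - [Y]`. -/
def grothendieckRelators :
    AddSubgroup (FreeAbelianGroup (Quotient (isIsomorphicSetoid C))) :=
  AddSubgroup.closure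
    { a | ∃ X Y : C,
        a = FreeAbelianGroup.of ⟦X ⊞ Y⟧ - FreeAbelianGroup.of ⟦X⟧ -
          FreeAbelianGroup.of ⟦Y⟧ }

/-- The split Grothendieck group `K₀(C)` of an additive category `C`: the quotient of
the free abelian group on the isomorphism classes of objects of `C` by the subgroup
generated by the elements `[X ⊕ Y] - [X] - [Y]`. -/
abbrev K0 := FreeAbelianGroup (Quotient (isIsomorphicSetoid C)) ⧸ grothendieckRelators C

/-- The class `[X]` in `K₀(C)` of an object `X` of `C`. -/
def K0.cls (X : C) : K0 C :=
  QuotientAddGroup.mk (FreeAbelianGroup.of ⟦X⟧)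

end K0Defs

/-!
The class `[1_X]` depends only on the isomorphism class of `X`, since for `e : X ≅ Y` it equals
`[e.hom ≫ e.inv] = [e.inv ≫ e.hom] = [1_Y]`. It is additive on biproducts: writing
`1_{X ⊞ Y} = fst ≫ inl + snd ≫ inr` and using `[fst ≫ inl] = [inl ≫ fst] = [1_X]` gives
`[1_{X ⊞ Y}] = [1_X] + [1_Y]`. Hence `X ↦ [1_X]` descends to `K₀(C)`, uniquely since the
classes `[X]` generate it.
-/

section Trace

variable [Preadditive C] [CategoryTheory.Linear k C]

lemma traceClass_comp_comm {X Y : C} (f : X ⟶ Y) (g : Y ⟶ X) :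
    traceClass k C (f ≫ g) = traceClass k C (g ≫ f) := by
  classical
  rw [traceClass, traceClass, Submodule.Quotient.eq]
  exact Submodule.subset_span ⟨X, Y, f, g, rfl⟩

lemma traceClass_add {X : C} (f g : X ⟶ X) :
    traceClass k C (f + g) = traceClass k C f + traceClass k C g := by
  classical
  simp only [traceClass, ← Submodule.Quotient.mk_add, map_add]

lemma traceClass_id_eq_of_iso {X Y : C} (e : X ≅ Y) :
    traceClass k C (𝟙 X) = traceClass k C (𝟙 Y) := by
  simpa using traceClass_comp_comm k C e.hom e.inv

lemma traceClass_id_biprod (X Y : C) [HasBinaryBiproduct X Y] :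
    traceClass k C (𝟙 (X ⊞ Y)) = traceClass k C (𝟙 X) + traceClass k C (𝟙 Y) := by
  rw [← biprod.total, traceClass_add, traceClass_comp_comm k C biprod.fst,
    traceClass_comp_comm k C biprod.snd, biprod.inl_fst, biprod.inr_snd]

end Trace

namespace K0

variable {A : Type*} [AddCommGroup A]

noncomputable def freeLift (f : C → A) (hiso : ∀ {X Y : C}, (X ≅ Y) → f X = f Y) :
    FreeAbelianGroup (Quotient (isIsomorphicSetoid C)) →+ A :=
  FreeAbelianGroup.lift (Quotient.lift f fun _ _ ⟨e⟩ => hiso e)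

lemma freeLift_of (f : C → A) (hiso : ∀ {X Y : C}, (X ≅ Y) → f X = f Y) (X : C) :
    freeLift C f hiso (FreeAbelianGroup.of ⟦X⟧) = f X := by
  simp [freeLift]

variable [Preadditive C] [HasBinaryBiproducts C]

lemma grothendieckRelators_le_ker_freeLift (f : C → A)
    (hiso : ∀ {X Y : C}, (X ≅ Y) → f X = f Y) (hbiprod : ∀ X Y : C, f (X ⊞ Y) = f X + f Y) :
    grothendieckRelators C ≤ (freeLift C f hiso).ker := by
  rw [grothendieckRelators, AddSubgroup.closure_le]
  rintro _ ⟨X, Y, rfl⟩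
  simp [freeLift_of, hbiprod]

noncomputable def lift (f : C → A) (hiso : ∀ {X Y : C}, (X ≅ Y) → f X = f Y)
    (hbiprod : ∀ X Y : C, f (X ⊞ Y) = f X + f Y) : K0 C →+ A :=
  QuotientAddGroup.lift _ (freeLift C f hiso)
    (grothendieckRelators_le_ker_freeLift C f hiso hbiprod)

@[simp]
lemma lift_cls (f : C → A) (hiso : ∀ {X Y : C}, (X ≅ Y) → f X = f Y)
    (hbiprod : ∀ X Y : C, f (X ⊞ Y) = f X + f Y) (X : C) :
    lift C f hiso hbiprod (cls C X) = f X :=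
  freeLift_of C f hiso X

lemma hom_ext {g h : K0 C →+ A} (H : ∀ X : C, g (cls C X) = h (cls C X)) : g = h := by
  ext X
  exact Quotient.inductionOn X H

end K0

/-- Let `C` be a `k`-linear category with finite biproducts.  Then there is a
well-defined homomorphism of abelian groups `h : K₀(C) → Tr(C)` (the Chern character
map) determined by `h([X]) = [1_X]` for every object `X` of `C`. -/
theorem chern_character_exists [Preadditive C] [CategoryTheory.Linear k C]
    [HasFiniteBiproducts C] :
    ∃! h : K0 C →+ CatTrace k C, ∀ X : C, h (K0.cls C X) = traceClass k C (𝟙 X) := by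
  refine ⟨K0.lift C (fun X => traceClass k C (𝟙 X)) (traceClass_id_eq_of_iso k C)
    (fun X Y => traceClass_id_biprod k C X Y), K0.lift_cls C _ _ _, fun h hh => ?_⟩
  exact K0.hom_ext C fun X => by rw [hh, K0.lift_cls]
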